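/- arXiv:1406.4005 — 9 statements merged into one kernel-verified Lean document; each statement's English description precedes it below -/
import Mathlib

section
/- Let C be a cycle graph on n ≥ 3 vertices whose vertex set is partitioned into two nonempty sets A and B. Then the subgraph of C induced on A has exactly the same number of connected components as the subgraph of C induced on B. -/
/-!
Call `i ∈ A` an exit of `A` if `i + 1 ∉ A`. When `A ≠ univ`, walking forward from any vertex of
`A` stays in `A` until it reaches an exit, and the first exit reached is constant along edges
inside `A`; so the components of `A` are in bijection with its exits. The exits of `Aᶜ` are the
entries of `A` (`i ∉ A`, `i + 1 ∈ A`), and a finite set has as many exits as entries because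
`|A \ σ⁻¹A| = |σ⁻¹A \ A|` for the rotation `σ`.
-/

open SimpleGraph
open Fin.NatCast Fin.CommRing

theorem SimpleGraph.Reachable.eq_of_forall_adj_eq {V β : Type*} {G : SimpleGraph V} {f : V → β}
    (hf : ∀ v w, G.Adj v w → f v = f w) {u v : V} (h : G.Reachable u v) : f u = f v := by
  obtain ⟨p⟩ := h
  induction p with
  | nil => rfl
  | cons ha _ ih => exact (hf _ _ ha).trans ih

theorem Set.ncard_sdiff_preimage_eq {α : Type*} {s : Set α} (hs : s.Finite) (σ : α ≃ α) :
    (s \ σ ⁻¹' s).ncard = (σ ⁻¹' s \ s).ncard :=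
  (ncard_eq_ncard_iff_ncard_sdiff_eq_ncard_sdiff hs (hs.preimage σ.injective.injOn)).1
    (ncard_preimage_of_injective_subset_range σ.injective (by simp)).symm

section

variable {m : ℕ} (A : Set (Fin (m + 2)))

theorem SimpleGraph.cycleGraph_adj_add_one (v : Fin (m + 2)) :
    (cycleGraph (m + 2)).Adj v (v + 1) := by
  simp [cycleGraph_adj]

/- `nextExit A v` is the last vertex of the run of `A` starting at `v`. When `A = univ` the set
below is empty and `sInf ∅ = 0`, hence the hypothesis `Aᶜ.Nonempty` in the lemmas. -/
noncomputable def exitOffset (v : Fin (m + 2)) : ℕ := sInf {k : ℕ | v + k + 1 ∉ A}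

noncomputable def nextExit (v : Fin (m + 2)) : Fin (m + 2) := v + exitOffset A v

def exits : Set (Fin (m + 2)) := A \ (· + 1) ⁻¹' A

variable {A}

theorem exitOffset_set_nonempty (hA : Aᶜ.Nonempty) (v : Fin (m + 2)) :
    {k : ℕ | v + k + 1 ∉ A}.Nonempty := by
  obtain ⟨b, hb⟩ := hA
  refine ⟨(b - v - 1).val, ?_⟩
  show v + _ + 1 ∉ A
  rwa [Fin.cast_val_eq_self, show v + (b - v - 1) + 1 = b by ring]

theorem nextExit_of_mem_exits {i : Fin (m + 2)} (hi : i ∈ exits A) : nextExit A i = i := by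
  have : exitOffset A i = 0 := Nat.sInf_eq_zero.2 (Or.inl (by simpa using hi.2))
  simp [nextExit, this]

theorem exitOffset_eq_succ (hA : Aᶜ.Nonempty) {v : Fin (m + 2)} (hv : v + 1 ∈ A) :
    exitOffset A v = exitOffset A (v + 1) + 1 := by
  have hset : {k : ℕ | v + 1 + k + 1 ∉ A} = {k : ℕ | v + (k + 1 : ℕ) + 1 ∉ A} := by
    ext k; simp only [Set.mem_ofPred_eq]; push_cast; ring_nf
  have hpos : 1 ≤ exitOffset A v := by
    refine le_csInf (exitOffset_set_nonempty hA v) fun k hk => Nat.one_le_iff_ne_zero.2 ?_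
    rintro rfl
    exact hk (by simpa using hv)
  rw [exitOffset, exitOffset, hset]
  exact (Nat.sInf_add hpos).symm

theorem nextExit_add_one (hA : Aᶜ.Nonempty) {v : Fin (m + 2)} (hv : v + 1 ∈ A) :
    nextExit A (v + 1) = nextExit A v := by
  simp only [nextExit, exitOffset_eq_succ hA hv]; push_cast; ring

theorem nextExit_mem_exits (hA : Aᶜ.Nonempty) {v : Fin (m + 2)} (hv : v ∈ A) :
    nextExit A v ∈ exits A := by
  have hspec := Nat.sInf_mem (exitOffset_set_nonempty hA v)
  refine ⟨?_, hspec⟩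
  rcases hK : exitOffset A v with _ | k
  · simpa [nextExit, hK] using hv
  · have hk : v + k + 1 ∈ A := by
      simpa using Nat.notMem_of_lt_sInf (s := {k : ℕ | v + k + 1 ∉ A}) (by
        rw [← exitOffset, hK]; exact Nat.lt_add_one k)
    simpa [nextExit, hK, add_assoc] using hk

theorem nextExit_eq_of_adj (hA : Aᶜ.Nonempty) {v w : Fin (m + 2)} (hv : v ∈ A) (hw : w ∈ A)
    (h : (cycleGraph (m + 2)).Adj v w) : nextExit A v = nextExit A w := by
  rcases cycleGraph_adj.1 h with h | h
  · obtain rfl : v = w + 1 := sub_eq_iff_eq_add'.1 h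
    exact nextExit_add_one hA hv
  · obtain rfl : w = v + 1 := sub_eq_iff_eq_add'.1 h
    exact (nextExit_add_one hA hw).symm

theorem reachable_nextExit (hA : Aᶜ.Nonempty) {v : Fin (m + 2)} (hv : v ∈ A)
    (hv' : nextExit A v ∈ A) :
    ((cycleGraph (m + 2)).induce A).Reachable ⟨v, hv⟩ ⟨nextExit A v, hv'⟩ := by
  induction hK : exitOffset A v generalizing v with
  | zero =>
    have : nextExit A v = v := by simp [nextExit, hK]
    simp only [this]
    rfl
  | succ k ih =>
    have hv1 : v + 1 ∈ A := by
      by_contra h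
      exact k.succ_ne_zero (hK.symm.trans (Nat.sInf_eq_zero.2 (Or.inl (by simpa using h))))
    have hk : exitOffset A (v + 1) = k := by
      rw [exitOffset_eq_succ hA hv1] at hK; omega
    have hv1' : nextExit A (v + 1) ∈ A := nextExit_add_one hA hv1 ▸ hv'
    have hadj : ((cycleGraph (m + 2)).induce A).Adj ⟨v, hv⟩ ⟨v + 1, hv1⟩ :=
      cycleGraph_adj_add_one v
    refine hadj.reachable.trans ?_
    convert ih hv1 hv1' hk using 2
    exact (nextExit_add_one hA hv1).symm

theorem card_connectedComponent_induce_eq_ncard_exits (hA : Aᶜ.Nonempty) :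
    Nat.card ((cycleGraph (m + 2)).induce A).ConnectedComponent = (exits A).ncard := by
  rw [← Nat.card_coe_set_eq]
  refine (Nat.card_congr (Equiv.ofBijective
    (fun i : exits A => ((cycleGraph (m + 2)).induce A).connectedComponentMk ⟨i, i.2.1⟩)
    ⟨?_, ?_⟩)).symm
  · rintro ⟨i, hi⟩ ⟨j, hj⟩ hij
    have := (ConnectedComponent.eq.1 hij).eq_of_forall_adj_eq (f := fun v : A => nextExit A v)
      fun v w h => nextExit_eq_of_adj hA v.2 w.2 h
    simp only [nextExit_of_mem_exits hi, nextExit_of_mem_exits hj] at this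
    exact Subtype.ext this
  · refine ConnectedComponent.ind fun ⟨v, hv⟩ => ⟨⟨nextExit A v, nextExit_mem_exits hA hv⟩, ?_⟩
    exact ConnectedComponent.sound (reachable_nextExit hA hv _).symm

end

theorem cycle_partition_component_count_general (n : ℕ) (A B : Set (Fin n))
    (hA : A.Nonempty) (hB : B.Nonempty)
    (hcover : A ∪ B = Set.univ) (hdisj : Disjoint A B) :
    Nat.card ((SimpleGraph.cycleGraph n).induce A).ConnectedComponent =
      Nat.card ((SimpleGraph.cycleGraph n).induce B).ConnectedComponent := by
  obtain rfl : B = Aᶜ := (IsCompl.of_eq hdisj.eq_bot (by exact hcover)).compl_eq.symm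
  obtain ⟨a, ha⟩ := hA
  obtain ⟨b, hb⟩ := hB
  have hn : 2 ≤ n := Fin.nontrivial_iff_two_le.1 ⟨a, b, fun h => hb (h ▸ ha)⟩
  obtain ⟨m, rfl⟩ := Nat.exists_eq_add_of_le' hn
  rw [card_connectedComponent_induce_eq_ncard_exits ⟨b, hb⟩,
    card_connectedComponent_induce_eq_ncard_exits ⟨a, not_not.2 ha⟩]
  have hexits : exits Aᶜ = (Equiv.addRight (1 : Fin (m + 2))) ⁻¹' A \ A := by
    ext; simp [exits, and_comm]
  rw [hexits]
  exact Set.ncard_sdiff_preimage_eq (Set.toFinite A) (Equiv.addRight 1)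

/-- A cycle graph on `n ≥ 3` vertices whose vertex set is partitioned into two
nonempty sets `A` and `B` has the same number of connected components induced
on `A` as induced on `B`. -/
theorem cycle_partition_component_count (n : ℕ) (hn : 3 ≤ n) (A B : Set (Fin n))
    (hA : A.Nonempty) (hB : B.Nonempty)
    (hcover : A ∪ B = Set.univ) (hdisj : Disjoint A B) :
    Nat.card ((SimpleGraph.cycleGraph n).induce A).ConnectedComponent =
      Nat.card ((SimpleGraph.cycleGraph n).induce B).ConnectedComponent :=
  cycle_partition_component_count_general n A B hA hB hcover hdisj
end

section
/- Let G be a finite simple graph with vertex set V and h : V → ℝ an injective height function. Let u and v be adjacent vertices with h(v) < h(u), suppose v is a minimum (every neighbour of v is higher than v), suppose no vertex separates u and v, and suppose u and v have a common neighbour. Then u is not a maximum; that is, u has a neighbour x with h(x) > h(u). -/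
/-- If `v` is a minimum adjacent to `u` with `h v < h u`, no vertex separates `u` and `v`,
and `u` and `v` have a common neighbour, then `u` is not a maximum: it has a neighbour
strictly above it. -/
theorem adjacent_to_minimum_not_maximum {V : Type*} [Fintype V] (G : SimpleGraph V)
    (h : V → ℝ) (hinj : Function.Injective h) (u v : V)
    (huv : G.Adj u v) (hlt : h v < h u)
    (hmin : ∀ x, G.Adj v x → h v < h x)
    (hsep : ∀ w, w ≠ u → w ≠ v → ¬(h v < h w ∧ h w < h u))
    (hcommon : ∃ w, G.Adj u w ∧ G.Adj v w) :
    ∃ x, G.Adj u x ∧ h u < h x := by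
  obtain ⟨w, hw1, hw2⟩ := hcommon
  have hwu : w ≠ u := fun e => G.irrefl (e ▸ hw1)
  have hwv : w ≠ v := fun e => G.irrefl (e ▸ hw2)
  have h1 : h v < h w := hmin w hw2
  have h2 : ¬ h w < h u := fun hc => hsep w hwu hwv ⟨h1, hc⟩
  exact ⟨w, hw1, lt_of_le_of_ne (not_lt.mp h2) (fun e => hwu (hinj e.symm))⟩
end

section
/- Let G be a finite simple graph with vertex set V and h : V → ℝ an injective height function. Let u and v be adjacent vertices with h(v) < h(u), suppose v is a minimum, u is regular (its lower link is nonempty and connected), and no vertex separates u and v. Then lowerlink(u) = {v}. Consequently, for the swapped height function h' (with h'(v) = h(u), h'(u) = h(v), h' = h elsewhere), u is a minimum with respect to h' and the lower link of v with respect to h' is exactly {u}; i.e., the minimum shifts from v to u. -/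
/-- The lower link of a vertex `w`: the set of neighbours of `w` strictly below `w`. -/
def lowerLink {V : Type*} (G : SimpleGraph V) (h : V → ℝ) (w : V) : Set V :=
  {x | G.Adj w x ∧ h x < h w}

/-- The height function obtained from `h` by swapping the heights of `u` and `v`. -/
def swapH {V : Type*} [DecidableEq V] (h : V → ℝ) (u v : V) : V → ℝ :=
  fun w => if w = v then h u else if w = u then h v else h w

/-- Shift event moving a minimum from `v` to `u`: if `v` is a minimum adjacent to `u`
with `h v < h u`, `u` is regular (nonempty connected lower link), and no vertex
separates `u` and `v`, then the lower link of `u` is exactly `{v}`; after swapping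
the heights of `u` and `v`, `u` becomes a minimum and the lower link of `v` is `{u}`. -/
theorem shift_event_minimum {V : Type*} [Fintype V] [DecidableEq V] (G : SimpleGraph V)
    (h : V → ℝ) (hinj : Function.Injective h) (u v : V)
    (huv : G.Adj u v) (hlt : h v < h u)
    (hmin : ∀ x, G.Adj v x → h v < h x)
    (hregNe : (lowerLink G h u).Nonempty)
    (hregConn : (G.induce (lowerLink G h u)).Connected)
    (hsep : ∀ w, w ≠ u → w ≠ v → ¬(h v < h w ∧ h w < h u)) :
    lowerLink G h u = {v} ∧
    lowerLink G (swapH h u v) u = ∅ ∧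
    lowerLink G (swapH h u v) v = {u} := by
  have hvmem : v ∈ lowerLink G h u := ⟨huv, hlt⟩
  have euu : swapH h u v u = h v := by simp [swapH, huv.ne]
  have evv : swapH h u v v = h u := by simp [swapH]
  have eo : ∀ x, x ≠ u → x ≠ v → swapH h u v x = h x := by
    intro x hxu hxv; simp [swapH, hxu, hxv]
  have key : lowerLink G h u = {v} := by
    apply Set.eq_singleton_iff_unique_mem.2
    refine ⟨hvmem, ?_⟩
    intro x hx
    obtain ⟨w⟩ := hregConn.preconnected ⟨v, hvmem⟩ ⟨x, hx⟩
    cases w with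
    | nil => rfl
    | @cons _ b _ hadj w' =>
      exfalso
      have hGadj : G.Adj v (b : V) := hadj
      have hbne : (b : V) ≠ v := fun he => G.irrefl (he ▸ hGadj)
      have hbu : (b : V) ≠ u := fun he => absurd (he ▸ b.2.2) (lt_irrefl _)
      exact hsep b hbu hbne ⟨hmin _ hGadj, b.2.2⟩
  refine ⟨key, ?_, ?_⟩
  · ext x
    simp only [lowerLink, Set.mem_setOf_eq, Set.mem_empty_iff_false, iff_false]
    rintro ⟨hadj, hxlt⟩
    have hxu : x ≠ u := fun he => G.irrefl (he ▸ hadj)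
    rw [euu] at hxlt
    by_cases hxv : x = v
    · subst hxv; rw [evv] at hxlt; exact absurd hxlt (not_lt.2 hlt.le)
    · rw [eo x hxu hxv] at hxlt
      have : x ∈ lowerLink G h u := ⟨hadj, hxlt.trans hlt⟩
      rw [key] at this
      exact hxv this
  · ext x
    simp only [lowerLink, Set.mem_setOf_eq, Set.mem_singleton_iff]
    constructor
    · rintro ⟨hadj, hxlt⟩
      have hxv : x ≠ v := fun he => G.irrefl (he ▸ hadj)
      rw [evv] at hxlt
      by_contra hxu
      rw [eo x hxu hxv] at hxlt
      exact hsep x hxu hxv ⟨hmin x hadj, hxlt⟩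
    · rintro rfl
      exact ⟨huv.symm, by rw [euu, evv]; exact hlt⟩
end

section
/- Let G be a finite simple graph with vertex set V and h : V → ℝ an injective height function. Let u and v be adjacent vertices with h(v) < h(u); suppose v is a minimum, u is a simple saddle (its lower link and its upper link each have exactly two connected components), the subgraph induced on the neighbourhood of u is a cycle, the subgraph induced on the neighbourhood of v is a cycle on at least 3 vertices, and no vertex separates u and v. Then for the swapped height function h': the lower link of u with respect to h' equals lowerlink_h(u) \ {v} and is nonempty and connected; the upper link of u with respect to h' equals upperlink_h(u) ∪ {v} and is nonempty and connected; the lower link of v with respect to h' is {u} and the upper link of v with respect to h' is connected and nonempty. Hence both u and v are regular vertices with respect to h'. -/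
/-- The upper link of a vertex `w`: the set of neighbours of `w` strictly above `w`. -/
def upperLink {V : Type*} (G : SimpleGraph V) (h : V → ℝ) (w : V) : Set V :=
  {x | G.Adj w x ∧ h w < h x}

section

open Fin.CommRing

lemma Fin.exists_mem_sub_one_notMem {n : ℕ} [NeZero n] {S : Set (Fin n)} (hS : S.Nonempty)
    (hSc : Sᶜ.Nonempty) : ∃ a ∈ S, a - 1 ∉ S := by
  classical
  obtain ⟨s, hs⟩ := hS
  obtain ⟨b, hb⟩ := hSc
  have hex : ∃ k : ℕ, b + (k : Fin n) ∈ S := ⟨(s - b).val, by simpa using hs⟩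
  have hk : Nat.find hex ≠ 0 := fun h0 => hb (by simpa [h0] using Nat.find_spec hex)
  refine ⟨_, Nat.find_spec hex, fun hmem => Nat.find_min hex (Nat.sub_one_lt hk) ?_⟩
  simpa [Nat.cast_pred (Nat.pos_of_ne_zero hk), add_sub_assoc] using hmem

end

open Set.Notation

namespace SimpleGraph

section CycleGraph

open Fin.CommRing

variable {n : ℕ}

lemma cycleGraph_adj_add_one_s6 (x : Fin (n + 2)) : (cycleGraph (n + 2)).Adj x (x + 1) :=
  cycleGraph_adj.2 (Or.inr (by ring))

lemma connected_induce_cycleGraph_setOf_le_val_sub (a : Fin (n + 2)) {m : ℕ} (hm : m < n + 2) :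
    ((cycleGraph (n + 2)).induce {x | m ≤ (x - a).val}).Connected := by
  have hmem : ∀ k, m ≤ k → k < n + 2 → a + (k : Fin (n + 2)) ∈ {x | m ≤ (x - a).val} :=
    fun k hmk hk => by simpa [Fin.val_cast_of_lt hk] using hmk
  have hreach : ∀ k (hmk : m ≤ k) (hk : k < n + 2),
      ((cycleGraph (n + 2)).induce {x | m ≤ (x - a).val}).Reachable
        ⟨a + m, hmem m le_rfl hm⟩ ⟨a + k, hmem k hmk hk⟩ := by
    intro k hmk
    induction k, hmk using Nat.le_induction with
    | base => exact fun _ => .rfl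
    | succ k hmk ih =>
      refine fun hk => (ih (by omega)).trans (Adj.reachable ?_)
      simpa [add_assoc] using cycleGraph_adj_add_one_s6 (a + (k : Fin (n + 2)))
  rw [connected_iff_exists_forall_reachable]
  refine ⟨⟨a + m, hmem m le_rfl hm⟩, fun x => ?_⟩
  convert hreach _ x.2 (x - a).isLt
  simp

lemma exists_eq_setOf_val_sub_lt_of_connected_induce_cycleGraph {S : Set (Fin (n + 2))}
    (hS : ((cycleGraph (n + 2)).induce S).Connected) (hSc : Sᶜ.Nonempty) :
    ∃ a : Fin (n + 2), ∃ m < n + 2, S = {x | (x - a).val < m} := by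
  classical
  obtain ⟨a, ha, ha'⟩ :=
    Fin.exists_mem_sub_one_notMem (Set.nonempty_coe_sort.1 hS.nonempty) hSc
  -- `S` is the arc from `a` up to the first offset `m` leaving `S`: a walk inside `S` starting
  -- at `a` can leave this arc neither below `a` (as `a - 1 ∉ S`) nor at its top end `a + m`.
  have hlast : a + ((n + 1 : ℕ) : Fin (n + 2)) = a - 1 := by
    have : ((n + 2 : ℕ) : Fin (n + 2)) = 0 := Fin.natCast_self _
    push_cast at this ⊢
    linear_combination this
  have hex : ∃ k : ℕ, a + (k : Fin (n + 2)) ∉ S := ⟨n + 1, hlast ▸ ha'⟩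
  set m := Nat.find hex
  have hmS : a + (m : Fin (n + 2)) ∉ S := Nat.find_spec hex
  have hm : m ≤ n + 1 := Nat.find_le (by rwa [hlast])
  have hstep : ∀ x y : Fin (n + 2), x ∈ S → y ∈ S → (cycleGraph (n + 2)).Adj x y →
      (x - a).val < m → (y - a).val < m := by
    intro x y hx hy hxy hxm
    rcases cycleGraph_adj.1 hxy with hyx | hyx
    · have hy' : y - a = (x - a) - 1 := by linear_combination -hyx
      have hxa : x - a ≠ 0 := fun h0 =>
        ha' (by rwa [show a - 1 = y by linear_combination -hy' - h0])
      rw [hy', Fin.val_sub_one_of_ne_zero hxa]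
      omega
    · have hy' : y - a = (x - a) + 1 := by linear_combination hyx
      have hval : (y - a).val = (x - a).val + 1 := by
        rw [hy', Fin.val_add_one_of_lt' (by simp; omega)]
      refine lt_of_le_of_ne (by omega) fun hym => hmS ?_
      have hy'' : a + ((y - a).val : Fin (n + 2)) ∈ S := by simpa using hy
      rwa [hym] at hy''
  have hmpos : 0 < m := Nat.pos_of_ne_zero fun h0 => hmS (by simpa [h0] using ha)
  have hsub : ∀ x : S, ((x : Fin (n + 2)) - a).val < m := by
    have hwalk : ∀ {x y : S}, ((cycleGraph (n + 2)).induce S).Walk x y →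
        ((x : Fin (n + 2)) - a).val < m → ((y : Fin (n + 2)) - a).val < m := by
      intro x y w
      induction w with
      | nil => exact id
      | cons hxy _ ih =>
        exact fun hx => ih (hstep _ _ (Subtype.mem _) (Subtype.mem _) hxy hx)
    exact fun x => hwalk (hS.preconnected ⟨a, ha⟩ x).some (by simpa using hmpos)
  refine ⟨a, m, by omega, Set.ext fun x => ⟨fun hx => hsub ⟨x, hx⟩, fun hx => ?_⟩⟩
  simpa using Nat.find_min hex hx

end CycleGraph

theorem connected_induce_compl_cycleGraph {n : ℕ} {S : Set (Fin n)}
    (hS : ((cycleGraph n).induce S).Connected) (hSc : Sᶜ.Nonempty) :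
    ((cycleGraph n).induce Sᶜ).Connected := by
  obtain ⟨s⟩ := hS.nonempty
  obtain ⟨t, ht⟩ := hSc
  have hst : (s : Fin n).val ≠ t.val := Fin.val_injective.ne fun hst => ht (hst ▸ s.2)
  obtain ⟨n, rfl⟩ : ∃ k, n = k + 2 := ⟨n - 2, by have := s.1.isLt; have := t.isLt; omega⟩
  obtain ⟨a, m, hm, rfl⟩ :=
    exists_eq_setOf_val_sub_lt_of_connected_induce_cycleGraph hS ⟨t, ht⟩
  rw [show {x : Fin (n + 2) | (x - a).val < m}ᶜ = {x | m ≤ (x - a).val} by ext; simp]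
  exact connected_induce_cycleGraph_setOf_le_val_sub a hm

variable {V W : Type*} {G : SimpleGraph V}

def induceInduceIso {A T : Set V} (hTA : T ⊆ A) :
    (G.induce A).induce (A ↓∩ T) ≃g G.induce T where
  toFun x := ⟨x.1.1, x.2⟩
  invFun x := ⟨⟨x.1, hTA x.2⟩, x.2⟩
  left_inv _ := rfl
  right_inv _ := rfl
  map_rel_iff' := Iff.rfl

lemma connected_induce_compl_singleton_of_card_eq_two {H : SimpleGraph W} {w : W}
    (hcard : Nat.card H.ConnectedComponent = 2) (hw : ∀ x, ¬ H.Adj w x) :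
    (H.induce {w}ᶜ).Connected := by
  obtain ⟨c, hc, huniq⟩ := (Nat.card_eq_two_iff' (H.connectedComponentMk w)).1 hcard
  have hsupp : c.supp = {w}ᶜ := by
    ext x
    rw [ConnectedComponent.mem_supp_iff, Set.mem_compl_singleton_iff]
    refine ⟨by rintro hx rfl; exact hc hx.symm, fun hxw => huniq _ fun hxc => hxw ?_⟩
    obtain ⟨p⟩ := (ConnectedComponent.exact hxc).symm
    cases p with
    | nil => rfl
    | cons hadj _ => exact absurd hadj (hw _)
  exact hsupp ▸ c.connected_toSimpleGraph

lemma connected_induce_diff_singleton_of_card_eq_two {S : Set V} {v : V}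
    (hcard : Nat.card (G.induce S).ConnectedComponent = 2) (hv : v ∈ S)
    (hiso : ∀ x ∈ S, ¬ G.Adj v x) : (G.induce (S \ {v})).Connected := by
  have hset : S ↓∩ (S \ {v}) = {⟨v, hv⟩}ᶜ := by ext; simp [Subtype.ext_iff]
  refine (induceInduceIso Set.sdiff_subset).connected_iff.1 ?_
  rw [hset]
  exact connected_induce_compl_singleton_of_card_eq_two hcard fun x => hiso x x.2

lemma connected_induce_diff_of_iso_cycleGraph {A S : Set V} {n : ℕ}
    (e : G.induce A ≃g cycleGraph n) (hSA : S ⊆ A) (hS : (G.induce S).Connected)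
    (hAS : (A \ S).Nonempty) : (G.induce (A \ S)).Connected := by
  have hbij : ∀ T : Set A, Set.BijOn e T (e '' T) := fun T => e.injective.injOn.bijOn_image
  have hcompl : (e '' (A ↓∩ S))ᶜ = e '' (A ↓∩ (A \ S)) := by
    rw [← Set.image_compl_eq e.bijective]
    congr 1
    ext
    simp
  have hS' := ((induceInduceIso hSA).comp (e.induce (hbij _)).symm).connected_iff.2 hS
  obtain ⟨x, hxA, hxS⟩ := hAS
  have hx : e ⟨x, hxA⟩ ∈ (e '' (A ↓∩ S))ᶜ := hcompl ▸ Set.mem_image_of_mem _ ⟨hxA, hxS⟩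
  have hAS' := connected_induce_compl_cycleGraph hS' ⟨_, hx⟩
  rw [hcompl] at hAS'
  exact ((induceInduceIso Set.sdiff_subset).comp (e.induce (hbij _)).symm).connected_iff.1 hAS'

end SimpleGraph

open SimpleGraph

section Links
variable {V : Type*} {G : SimpleGraph V} {h : V → ℝ} {u v : V}

lemma lowerLink_subset_neighborSet (G : SimpleGraph V) (h : V → ℝ) (w : V) :
    lowerLink G h w ⊆ G.neighborSet w :=
  fun _ hx => hx.1

lemma upperLink_eq_neighborSet_diff_lowerLink (hinj : Function.Injective h) (w : V) :
    upperLink G h w = G.neighborSet w \ lowerLink G h w := by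
  ext x
  simp only [upperLink, lowerLink, Set.mem_ofPred_eq, Set.mem_sdiff, mem_neighborSet, not_and,
    not_lt]
  exact and_congr_right fun hwx =>
    ⟨fun hlt _ => hlt.le, fun hle => (hle hwx).lt_of_ne (hinj.ne hwx.ne)⟩

lemma lt_iff_lt_of_not_separates (hinj : Function.Injective h) (hlt : h v < h u)
    (hsep : ∀ w, w ≠ u → w ≠ v → ¬(h v < h w ∧ h w < h u)) {w : V} (hwu : w ≠ u)
    (hwv : w ≠ v) : h w < h v ↔ h w < h u :=
  ⟨fun hw => hw.trans hlt, fun hw => not_le.1 fun hvw =>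
    hsep w hwu hwv ⟨hvw.lt_of_ne (hinj.ne hwv).symm, hw⟩⟩

variable [DecidableEq V]

lemma swapH_eq_comp_swap (h : V → ℝ) (u v : V) : swapH h u v = h ∘ Equiv.swap u v := by
  ext w
  simp only [swapH, Function.comp_apply, Equiv.swap_apply_def]
  split_ifs <;> subst_vars <;> rfl

lemma Function.Injective.swapH (hinj : Function.Injective h) (u v : V) :
    Function.Injective (swapH h u v) := by
  rw [swapH_eq_comp_swap]
  exact hinj.comp (Equiv.injective _)

lemma lowerLink_swapH_left (hinj : Function.Injective h) (hlt : h v < h u)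
    (hsep : ∀ w, w ≠ u → w ≠ v → ¬(h v < h w ∧ h w < h u)) :
    lowerLink G (swapH h u v) u = lowerLink G h u \ {v} := by
  ext x
  simp only [lowerLink, swapH_eq_comp_swap, Function.comp_apply, Equiv.swap_apply_left,
    Set.mem_ofPred_eq, Set.mem_sdiff, Set.mem_singleton_iff]
  rcases eq_or_ne x v with rfl | hxv
  · simpa using fun _ => hlt.le
  · simp only [hxv, not_false_eq_true, and_true]
    refine and_congr_right fun hux => ?_
    rw [Equiv.swap_apply_of_ne_of_ne hux.ne' hxv,
      lt_iff_lt_of_not_separates hinj hlt hsep hux.ne' hxv]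

lemma upperLink_swapH_left (hinj : Function.Injective h) (hlt : h v < h u)
    (hsep : ∀ w, w ≠ u → w ≠ v → ¬(h v < h w ∧ h w < h u)) (huv : G.Adj u v) :
    upperLink G (swapH h u v) u = upperLink G h u ∪ {v} := by
  rw [upperLink_eq_neighborSet_diff_lowerLink (hinj.swapH u v),
    lowerLink_swapH_left hinj hlt hsep, Set.sdiff_sdiff_right,
    ← upperLink_eq_neighborSet_diff_lowerLink hinj,
    Set.inter_singleton_of_mem (show v ∈ G.neighborSet u from huv)]

lemma lowerLink_swapH_right (hinj : Function.Injective h) (hlt : h v < h u)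
    (hsep : ∀ w, w ≠ u → w ≠ v → ¬(h v < h w ∧ h w < h u))
    (hmin : ∀ x, G.Adj v x → h v < h x) (huv : G.Adj u v) :
    lowerLink G (swapH h u v) v = {u} := by
  ext x
  simp only [lowerLink, swapH_eq_comp_swap, Function.comp_apply, Equiv.swap_apply_right,
    Set.mem_ofPred_eq, Set.mem_singleton_iff]
  rcases eq_or_ne x u with rfl | hxu
  · simpa using ⟨huv.symm, hlt⟩
  · refine iff_of_false (fun ⟨hvx, hx⟩ => ?_) hxu
    rw [Equiv.swap_apply_of_ne_of_ne hxu hvx.ne',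
      ← lt_iff_lt_of_not_separates hinj hlt hsep hxu hvx.ne'] at hx
    exact lt_asymm (hmin x hvx) hx

end Links

theorem death_event_general {V : Type*} [DecidableEq V] (G : SimpleGraph V)
    (h : V → ℝ) (hinj : Function.Injective h) (u v : V)
    (huv : G.Adj u v) (hlt : h v < h u)
    (hmin : ∀ x, G.Adj v x → h v < h x)
    (hsadL : Nat.card (G.induce (lowerLink G h u)).ConnectedComponent = 2)
    (hcycu : ∃ n, Nonempty ((G.induce (G.neighborSet u)) ≃g SimpleGraph.cycleGraph n))
    (hcycv : ∃ n, 3 ≤ n ∧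
      Nonempty ((G.induce (G.neighborSet v)) ≃g SimpleGraph.cycleGraph n))
    (hsep : ∀ w, w ≠ u → w ≠ v → ¬(h v < h w ∧ h w < h u)) :
    lowerLink G (swapH h u v) u = lowerLink G h u \ {v} ∧
    (lowerLink G (swapH h u v) u).Nonempty ∧
    (G.induce (lowerLink G (swapH h u v) u)).Connected ∧
    upperLink G (swapH h u v) u = upperLink G h u ∪ {v} ∧
    (upperLink G (swapH h u v) u).Nonempty ∧
    (G.induce (upperLink G (swapH h u v) u)).Connected ∧
    lowerLink G (swapH h u v) v = {u} ∧
    (upperLink G (swapH h u v) v).Nonempty ∧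
    (G.induce (upperLink G (swapH h u v) v)).Connected := by
  have hlow_u := lowerLink_swapH_left (G := G) hinj hlt hsep
  have hlow_v := lowerLink_swapH_right hinj hlt hsep hmin huv
  have hiso : ∀ x ∈ lowerLink G h u, ¬ G.Adj v x := fun x hx hvx =>
    lt_asymm (hmin x hvx) ((lt_iff_lt_of_not_separates hinj hlt hsep hx.1.ne' hvx.ne').2 hx.2)
  have hconn_low_u : (G.induce (lowerLink G (swapH h u v) u)).Connected :=
    hlow_u ▸ connected_induce_diff_singleton_of_card_eq_two hsadL ⟨huv, hlt⟩ hiso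
  obtain ⟨n, ⟨eu⟩⟩ := hcycu
  have hconn_up_u : (G.induce (upperLink G (swapH h u v) u)).Connected := by
    rw [upperLink_eq_neighborSet_diff_lowerLink (hinj.swapH u v)]
    exact connected_induce_diff_of_iso_cycleGraph eu (lowerLink_subset_neighborSet _ _ _)
      hconn_low_u ⟨v, huv, by simp [hlow_u]⟩
  obtain ⟨m, hm, ⟨ev⟩⟩ := hcycv
  have : Nontrivial (Fin m) := Fin.nontrivial_iff_two_le.2 (by omega)
  have hconn_up_v : (G.induce (upperLink G (swapH h u v) v)).Connected := by
    rw [upperLink_eq_neighborSet_diff_lowerLink (hinj.swapH u v), hlow_v]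
    exact connected_induce_diff_of_iso_cycleGraph ev (by simpa using huv.symm)
      Connected.of_subsingleton ((Set.nontrivial_coe_sort.1 ev.toEquiv.nontrivial).exists_ne u)
  exact ⟨hlow_u, Set.nonempty_coe_sort.1 hconn_low_u.nonempty, hconn_low_u,
    upperLink_swapH_left hinj hlt hsep huv, Set.nonempty_coe_sort.1 hconn_up_u.nonempty,
    hconn_up_u, hlow_v, Set.nonempty_coe_sort.1 hconn_up_v.nonempty, hconn_up_v⟩

/-- Death event: a minimum `v` adjacent to a simple saddle `u` (links of `u` and `v`
are cycles, no separating vertex) annihilate when their heights are swapped: both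
`u` and `v` become regular vertices. -/
theorem death_event {V : Type*} [Fintype V] [DecidableEq V] (G : SimpleGraph V)
    (h : V → ℝ) (hinj : Function.Injective h) (u v : V)
    (huv : G.Adj u v) (hlt : h v < h u)
    (hmin : ∀ x, G.Adj v x → h v < h x)
    (hsadL : Nat.card (G.induce (lowerLink G h u)).ConnectedComponent = 2)
    (hsadU : Nat.card (G.induce (upperLink G h u)).ConnectedComponent = 2)
    (hcycu : ∃ n, Nonempty ((G.induce (G.neighborSet u)) ≃g SimpleGraph.cycleGraph n))
    (hcycv : ∃ n, 3 ≤ n ∧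
      Nonempty ((G.induce (G.neighborSet v)) ≃g SimpleGraph.cycleGraph n))
    (hsep : ∀ w, w ≠ u → w ≠ v → ¬(h v < h w ∧ h w < h u)) :
    lowerLink G (swapH h u v) u = lowerLink G h u \ {v} ∧
    (lowerLink G (swapH h u v) u).Nonempty ∧
    (G.induce (lowerLink G (swapH h u v) u)).Connected ∧
    upperLink G (swapH h u v) u = upperLink G h u ∪ {v} ∧
    (upperLink G (swapH h u v) u).Nonempty ∧
    (G.induce (upperLink G (swapH h u v) u)).Connected ∧
    lowerLink G (swapH h u v) v = {u} ∧
    (upperLink G (swapH h u v) v).Nonempty ∧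
    (G.induce (upperLink G (swapH h u v) v)).Connected :=
  death_event_general G h hinj u v huv hlt hmin hsadL hcycu hcycv hsep
end

section
/- Let G be a finite simple graph with vertex set V and h : V → ℝ an injective height function. Let u and v be adjacent vertices with upperlink_h(v) = {u} (u is the unique neighbour of v higher than v); suppose u is regular with respect to h (its lower link and upper link are nonempty and connected), u and v have a common neighbour, and no vertex separates u and v. Then for the swapped height function h': v is a maximum with respect to h'; the lower link of u with respect to h' equals lowerlink_h(u) \ {v} and is nonempty; the upper link of u with respect to h' equals upperlink_h(u) ∪ {v}, in which v is an isolated vertex, so it is disconnected. Hence u is a saddle with respect to h'. -/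

lemma isolated_eq_of_reachable {V : Type*} {H : SimpleGraph V} {a c : V}
    (hiso : ∀ b, ¬ H.Adj a b) (hr : H.Reachable a c) : a = c := by
  obtain ⟨p⟩ := hr
  cases p with
  | nil => rfl
  | cons hadj _ => exact absurd hadj (hiso _)

/-- Birth event creating a maximum at `v` and a positive saddle at `u`: if `u` is the
unique neighbour of `v` above `v`, `u` is regular, `u` and `v` have a common neighbour
and no separating vertex exists, then after swapping heights `v` is a maximum and the
upper link of `u` becomes disconnected (with `v` isolated in it), so `u` is a saddle. -/
theorem birth_event_maximum_saddle {V : Type*} [Fintype V] [DecidableEq V]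
    (G : SimpleGraph V) (h : V → ℝ) (hinj : Function.Injective h) (u v : V)
    (huv : G.Adj u v)
    (hupv : upperLink G h v = {u})
    (hregLNe : (lowerLink G h u).Nonempty)
    (hregLConn : (G.induce (lowerLink G h u)).Connected)
    (hregUNe : (upperLink G h u).Nonempty)
    (hregUConn : (G.induce (upperLink G h u)).Connected)
    (hcommon : ∃ w, G.Adj u w ∧ G.Adj v w)
    (hsep : ∀ w, w ≠ u → w ≠ v → ¬(h v < h w ∧ h w < h u)) :
    upperLink G (swapH h u v) v = ∅ ∧
    lowerLink G (swapH h u v) u = lowerLink G h u \ {v} ∧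
    (lowerLink G (swapH h u v) u).Nonempty ∧
    upperLink G (swapH h u v) u = upperLink G h u ∪ {v} ∧
    (∀ x ∈ upperLink G (swapH h u v) u, ¬ G.Adj v x) ∧
    ¬ (G.induce (upperLink G (swapH h u v) u)).Connected := by
  -- basic facts
  have hvu : v ≠ u := fun e => (e ▸ huv).ne' rfl
  have huvne : u ≠ v := fun e => hvu e.symm
  have hvltu : h v < h u := by
    have : u ∈ upperLink G h v := hupv ▸ rfl
    exact this.2
  have hsv : swapH h u v v = h u := by simp [swapH]
  have hsu : swapH h u v u = h v := by simp [swapH, huvne]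
  have hsw : ∀ w, w ≠ u → w ≠ v → swapH h u v w = h w := by
    intro w hwu hwv; simp [swapH, hwu, hwv]
  -- part 1
  have h1 : upperLink G (swapH h u v) v = ∅ := by
    ext x
    simp only [upperLink, Set.mem_setOf_eq, Set.mem_empty_iff_false, iff_false, not_and]
    intro hadj hlt
    have hxv : x ≠ v := fun e => (e ▸ hadj).ne' rfl
    rcases eq_or_ne x u with rfl | hxu
    · rw [hsv, hsu] at hlt; exact absurd hlt (not_lt.2 hvltu.le)
    · rw [hsv, hsw x hxu hxv] at hlt
      have : x ∈ upperLink G h v := ⟨hadj, hvltu.trans hlt⟩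
      rw [hupv] at this
      exact hxu this
  -- part 2
  have h2 : lowerLink G (swapH h u v) u = lowerLink G h u \ {v} := by
    ext x
    simp only [lowerLink, Set.mem_setOf_eq, Set.mem_diff, Set.mem_singleton_iff]
    constructor
    · rintro ⟨hadj, hlt⟩
      have hxu : x ≠ u := fun e => (e ▸ hadj).ne' rfl
      have hxv : x ≠ v := by
        rintro rfl; rw [hsv, hsu] at hlt; exact absurd hlt (not_lt.2 hvltu.le)
      rw [hsw x hxu hxv, hsu] at hlt
      exact ⟨⟨hadj, hlt.trans hvltu⟩, hxv⟩
    · rintro ⟨⟨hadj, hlt⟩, hxv⟩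
      have hxu : x ≠ u := fun e => (e ▸ hadj).ne' rfl
      refine ⟨hadj, ?_⟩
      rw [hsw x hxu hxv, hsu]
      rcases lt_or_ge (h x) (h v) with hc | hc
      · exact hc
      · exact absurd ⟨lt_of_le_of_ne hc fun e => hxv (hinj e.symm), hlt⟩ (hsep x hxu hxv)
  -- part 3
  have h3 : (lowerLink G (swapH h u v) u).Nonempty := by
    obtain ⟨w, hwu, hwv⟩ := hcommon
    have hwu' : w ≠ u := fun e => (e ▸ hwu).ne' rfl
    have hwv' : w ≠ v := fun e => (e ▸ hwv).ne' rfl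
    have hwlt : h w < h v := by
      rcases lt_or_ge (h w) (h v) with hc | hc
      · exact hc
      · have : w ∈ upperLink G h v :=
          ⟨hwv, lt_of_le_of_ne hc fun e => hwv' (hinj e.symm)⟩
        rw [hupv] at this
        exact absurd this hwu'
    exact ⟨w, h2 ▸ ⟨⟨hwu, hwlt.trans hvltu⟩, hwv'⟩⟩
  -- part 4
  have h4 : upperLink G (swapH h u v) u = upperLink G h u ∪ {v} := by
    ext x
    simp only [upperLink, Set.mem_setOf_eq, Set.mem_union, Set.mem_singleton_iff]
    constructor
    · rintro ⟨hadj, hlt⟩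
      have hxu : x ≠ u := fun e => (e ▸ hadj).ne' rfl
      rcases eq_or_ne x v with rfl | hxv
      · exact Or.inr rfl
      · rw [hsw x hxu hxv, hsu] at hlt
        left
        refine ⟨hadj, ?_⟩
        rcases lt_or_ge (h u) (h x) with hc | hc
        · exact hc
        · exact absurd ⟨hlt, lt_of_le_of_ne hc fun e => hxu (hinj e)⟩ (hsep x hxu hxv)
    · rintro (⟨hadj, hlt⟩ | rfl)
      · have hxu : x ≠ u := fun e => (e ▸ hadj).ne' rfl
        have hxv : x ≠ v := by rintro rfl; exact absurd hlt (not_lt.2 hvltu.le)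
        rw [hsw x hxu hxv, hsu]
        exact ⟨hadj, hvltu.trans hlt⟩
      · rw [hsv, hsu]
        exact ⟨huv, hvltu⟩
  -- part 5
  have h5 : ∀ x ∈ upperLink G (swapH h u v) u, ¬ G.Adj v x := by
    intro x hx hadj
    rw [h4] at hx
    rcases hx with ⟨hadju, hlt⟩ | rfl
    · have : x ∈ upperLink G h v := ⟨hadj, hvltu.trans hlt⟩
      rw [hupv] at this
      subst this
      exact hadju.ne rfl
    · exact hadj.ne rfl
  -- part 6
  refine ⟨h1, h2, h3, h4, h5, ?_⟩
  intro hconn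
  obtain ⟨w, hw⟩ := hregUNe
  have hwmem : w ∈ upperLink G (swapH h u v) u := h4 ▸ Or.inl hw
  have hvmem : v ∈ upperLink G (swapH h u v) u := h4 ▸ Or.inr rfl
  have hwv : w ≠ v := by rintro rfl; exact absurd hw.2 (not_lt.2 hvltu.le)
  have hiso : ∀ b, ¬ (G.induce (upperLink G (swapH h u v) u)).Adj ⟨v, hvmem⟩ b := by
    intro b hadj
    exact h5 b.val b.property hadj
  have := isolated_eq_of_reachable hiso (hconn.preconnected ⟨v, hvmem⟩ ⟨w, hwmem⟩)
  exact hwv (congrArg Subtype.val this).symm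
end

section
/- Let G be a finite simple graph with vertex set V and h : V → ℝ an injective height function. Let u and v be adjacent vertices with upperlink_h(v) = {u}; suppose the upper link of u with respect to h has exactly two connected components, and no vertex separates u and v. Then for the swapped height function h', the upper link of u with respect to h' equals upperlink_h(u) ∪ {v}, the vertex v is isolated in it, and it has exactly three connected components (so u would become a multiple saddle, which is why this configuration is excluded in the paper's genericity assumption). -/
open SimpleGraph in
lemma card_insert_isolated {V : Type*} [Finite V] (G : SimpleGraph V) (S : Set V) (v : V)
    (hv : v ∉ S) (hiso : ∀ x ∈ S, ¬ G.Adj v x) :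
    Nat.card (G.induce (insert v S)).ConnectedComponent
      = Nat.card (G.induce S).ConnectedComponent + 1 := by
  classical
  set f : ↥(insert v S) → (G.induce S).ConnectedComponent ⊕ Unit :=
    fun x => if hx : (x : V) = v then Sum.inr () else
      Sum.inl ((G.induce S).connectedComponentMk
        ⟨x.1, (Set.mem_insert_iff.mp x.2).resolve_left hx⟩) with hf
  have key : ∀ a b : ↥(insert v S), (G.induce (insert v S)).Adj a b → f a = f b := by
    rintro ⟨a, ha⟩ ⟨b, hb⟩ hab
    have hab' : G.Adj a b := hab
    have hav : a ≠ v := by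
      rintro rfl
      rcases Set.mem_insert_iff.mp hb with rfl | hb'
      · exact hab'.ne rfl
      · exact hiso b hb' hab'
    have hbv : b ≠ v := by
      rintro rfl
      rcases Set.mem_insert_iff.mp ha with rfl | ha'
      · exact hab'.ne rfl
      · exact hiso a ha' hab'.symm
    have haS : a ∈ S := (Set.mem_insert_iff.mp ha).resolve_left hav
    have hbS : b ∈ S := (Set.mem_insert_iff.mp hb).resolve_left hbv
    have : (G.induce S).Adj ⟨a, haS⟩ ⟨b, hbS⟩ := hab'
    simp only [hf, hav, hbv, dif_neg, not_false_iff]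
    exact congrArg Sum.inl (ConnectedComponent.sound this.reachable)
  let hhom : G.induce S →g G.induce (insert v S) :=
    ⟨fun x => ⟨x.1, Set.mem_insert_of_mem _ x.2⟩, fun {a b} hab => hab⟩
  have e : (G.induce (insert v S)).ConnectedComponent ≃
      (G.induce S).ConnectedComponent ⊕ Unit := by
    refine ⟨ConnectedComponent.lift f ?_,
      Sum.elim (ConnectedComponent.map hhom)
        (fun _ => (G.induce (insert v S)).connectedComponentMk ⟨v, Set.mem_insert _ _⟩),
      ?_, ?_⟩
    · intro a b p _
      induction p with
      | nil => rfl
      | cons hadj p ih =>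
        exact (key _ _ hadj).trans (ih (SimpleGraph.Walk.IsPath.of_cons ‹_›))
    · intro c
      refine c.ind ?_
      rintro ⟨x, hx⟩
      by_cases hxv : x = v
      · subst hxv
        simp [f, ConnectedComponent.lift_mk]
      · simp only [ConnectedComponent.lift_mk, hf, dif_neg hxv, Sum.elim_inl,
          ConnectedComponent.map_mk, hhom]
        rfl
    · rintro (c | ⟨⟩)
      · refine c.ind ?_
        rintro ⟨x, hx⟩
        have hxv : x ≠ v := fun h => hv (h ▸ hx)
        simp only [Sum.elim_inl, ConnectedComponent.map_mk, ConnectedComponent.lift_mk,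
          hf, hhom]
        exact dif_neg hxv
      · simp [f, ConnectedComponent.lift_mk]
  rw [Nat.card_congr e, Nat.card_sum]
  simp

/-- If `u` is the unique neighbour of `v` above `v` and the upper link of `u` has
exactly two connected components, then after swapping the heights of `u` and `v` the
upper link of `u` gains `v` as an isolated vertex and has exactly three connected
components, i.e. `u` would become a multiple saddle. -/
theorem multiple_saddle_creation {V : Type*} [Fintype V] [DecidableEq V]
    (G : SimpleGraph V) (h : V → ℝ) (hinj : Function.Injective h) (u v : V)
    (huv : G.Adj u v)
    (hupv : upperLink G h v = {u})
    (h2 : Nat.card (G.induce (upperLink G h u)).ConnectedComponent = 2)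
    (hsep : ∀ w, w ≠ u → w ≠ v → ¬(h v < h w ∧ h w < h u)) :
    upperLink G (swapH h u v) u = upperLink G h u ∪ {v} ∧
    (∀ x ∈ upperLink G (swapH h u v) u, ¬ G.Adj v x) ∧
    Nat.card (G.induce (upperLink G (swapH h u v) u)).ConnectedComponent = 3 := by
  have hne : u ≠ v := huv.ne
  have hu : u ∈ upperLink G h v := by rw [hupv]; rfl
  have hvlt : h v < h u := hu.2
  have hsu : swapH h u v u = h v := by simp [swapH, hne]
  have hsv : swapH h u v v = h u := by simp [swapH]
  have hset : upperLink G (swapH h u v) u = upperLink G h u ∪ {v} := by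
    ext x
    simp only [upperLink, Set.mem_setOf_eq, Set.mem_union, Set.mem_singleton_iff]
    constructor
    · rintro ⟨hadj, hlt⟩
      by_cases hxv : x = v
      · exact Or.inr hxv
      · have hxu : x ≠ u := fun h => hadj.ne (h ▸ rfl)
        have hsx : swapH h u v x = h x := by simp [swapH, hxv, hxu]
        rw [hsu, hsx] at hlt
        have : ¬ h x < h u := fun hlt' => hsep x hxu hxv ⟨hlt, hlt'⟩
        have hne' : h x ≠ h u := fun he => hxu (hinj he)
        exact Or.inl ⟨hadj, lt_of_le_of_ne (not_lt.mp this) hne'.symm⟩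
    · rintro (⟨hadj, hlt⟩ | rfl)
      · have hxv : x ≠ v := by
          rintro rfl
          exact absurd (hvlt.trans hlt) (lt_irrefl _)
        have hxu : x ≠ u := fun h => hadj.ne (h ▸ rfl)
        have hsx : swapH h u v x = h x := by simp [swapH, hxv, hxu]
        exact ⟨hadj, by rw [hsu, hsx]; exact hvlt.trans hlt⟩
      · exact ⟨huv, by rw [hsu, hsv]; exact hvlt⟩
  have hiso : ∀ x ∈ upperLink G h u, ¬ G.Adj v x := by
    intro x hx hvx
    have : x ∈ upperLink G h v := ⟨hvx, hvlt.trans hx.2⟩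
    rw [hupv, Set.mem_singleton_iff] at this
    subst this
    exact absurd hx.2 (lt_irrefl _)
  have hvS : v ∉ upperLink G h u := fun hv => absurd (hvlt.trans hv.2) (lt_irrefl _)
  refine ⟨hset, ?_, ?_⟩
  · intro x hx hvx
    rw [hset] at hx
    rcases hx with hx | hx
    · exact hiso x hx hvx
    · rw [Set.mem_singleton_iff] at hx
      subst hx
      exact hvx.ne rfl
  · rw [hset, Set.union_singleton, card_insert_isolated G _ v hvS hiso, h2]
end

section
/- Let G be a finite simple graph with vertex set V and h : V → ℝ an injective height function. Let u and v be adjacent vertices with h(v) < h(u); suppose no vertex separates u and v, every common neighbour x of u and v satisfies h(x) > h(v), u is regular with respect to h (its lower link and upper link are nonempty and connected), and the subgraph induced on the upper link of v is a path graph in which u is an interior (degree-2) vertex. Then lowerlink_h(u) = {v}, and for the swapped height function h': u is a minimum with respect to h'; the upper link of v with respect to h' equals upperlink_h(v) \ {u} and is disconnected and nonempty, and the lower link of v with respect to h' contains u; hence v is a saddle with respect to h'. -/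
/-- Birth event creating a negative saddle at `v` and a minimum at `u`: if `u` is
regular, the upper link of `v` is a path in which `u` is an interior (degree-2)
vertex, all common neighbours of `u` and `v` lie above `v`, and no vertex separates
`u` and `v`, then the lower link of `u` is `{v}` and after swapping heights `u`
becomes a minimum while the upper link of `v` becomes disconnected, so `v` is a
saddle. -/
theorem birth_event_minimum_saddle {V : Type*} [Fintype V] [DecidableEq V]
    (G : SimpleGraph V) (h : V → ℝ) (hinj : Function.Injective h) (u v : V)
    (huv : G.Adj u v) (hlt : h v < h u)
    (hsep : ∀ w, w ≠ u → w ≠ v → ¬(h v < h w ∧ h w < h u))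
    (hcommon : ∀ x, G.Adj u x → G.Adj v x → h v < h x)
    (hregLNe : (lowerLink G h u).Nonempty)
    (hregLConn : (G.induce (lowerLink G h u)).Connected)
    (hregUNe : (upperLink G h u).Nonempty)
    (hregUConn : (G.induce (upperLink G h u)).Connected)
    (hpath : ∃ n, Nonempty ((G.induce (upperLink G h v)) ≃g SimpleGraph.pathGraph n))
    (hdeg : {x ∈ upperLink G h v | G.Adj u x}.ncard = 2) :
    lowerLink G h u = {v} ∧
    lowerLink G (swapH h u v) u = ∅ ∧
    upperLink G (swapH h u v) v = upperLink G h v \ {u} ∧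
    (upperLink G (swapH h u v) v).Nonempty ∧
    ¬ (G.induce (upperLink G (swapH h u v) v)).Connected ∧
    u ∈ lowerLink G (swapH h u v) v := by
  have hune : u ≠ v := huv.ne
  have hswu : swapH h u v u = h v := by simp [swapH, hune]
  have hswv : swapH h u v v = h u := by simp [swapH]
  have hswx : ∀ x, x ≠ u → x ≠ v → swapH h u v x = h x := by
    intro x hxu hxv; simp [swapH, hxu, hxv]
  have hvlow : v ∈ lowerLink G h u := ⟨huv, hlt⟩
  -- Part 1 : lower link of u is {v}
  have h1 : lowerLink G h u = {v} := by
    apply Set.eq_singleton_iff_unique_mem.mpr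
    refine ⟨hvlow, fun x hx => ?_⟩
    by_contra hxv
    have hxu : x ≠ u := fun e => G.irrefl (e ▸ hx.1)
    have hxlt : h x < h v := by
      rcases lt_trichotomy (h x) (h v) with h' | h' | h'
      · exact h'
      · exact absurd (hinj h') hxv
      · exact absurd ⟨h', hx.2⟩ (hsep x hxu hxv)
    have key : ∀ (y z : ↥(lowerLink G h u))
        (_ : (G.induce (lowerLink G h u)).Walk y z), h y.1 < h v → h z.1 < h v := by
      intro y z w
      induction w with
      | nil => exact fun hy => hy
      | @cons y z _ hadj w ih =>
        intro hy
        have hzadj : G.Adj y.1 z.1 := hadj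
        apply ih
        by_cases hz : z.1 = v
        · have hvadj : G.Adj v y.1 := hz ▸ hzadj.symm
          exact absurd hy (not_lt.mpr (hcommon y.1 y.2.1 hvadj).le)
        · have hzu : z.1 ≠ u := fun e => G.irrefl (e ▸ z.2.1)
          rcases lt_trichotomy (h z.1) (h v) with h' | h' | h'
          · exact h'
          · exact absurd (hinj h') hz
          · exact absurd ⟨h', z.2.2⟩ (hsep z.1 hzu hz)
    obtain ⟨w⟩ := hregLConn.preconnected ⟨x, hx⟩ ⟨v, hvlow⟩
    exact lt_irrefl _ (key _ _ w hxlt)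
  -- Part 2 : u becomes a minimum
  have h2 : lowerLink G (swapH h u v) u = ∅ := by
    ext x
    simp only [lowerLink, Set.mem_setOf_eq, Set.mem_empty_iff_false, iff_false, not_and]
    intro hadj
    have hxu : x ≠ u := fun e => G.irrefl (e ▸ hadj)
    rw [hswu]
    by_cases hxv : x = v
    · subst hxv; rw [hswv]; exact not_lt.mpr hlt.le
    · rw [hswx x hxu hxv]
      intro hxlt
      have : x ∈ lowerLink G h u := ⟨hadj, hxlt.trans hlt⟩
      rw [h1] at this
      exact hxv this
  -- Part 3 : new upper link of v
  have h3 : upperLink G (swapH h u v) v = upperLink G h v \ {u} := by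
    ext x
    constructor
    · rintro ⟨hadj, hgt⟩
      have hxv : x ≠ v := fun e => G.irrefl (e ▸ hadj)
      have hxu : x ≠ u := by
        intro e; subst e
        rw [hswu, hswv] at hgt
        exact absurd hgt (not_lt.mpr hlt.le)
      rw [hswv, hswx x hxu hxv] at hgt
      exact ⟨⟨hadj, hlt.trans hgt⟩, hxu⟩
    · rintro ⟨⟨hadj, hgt⟩, hxu'⟩
      have hxu : x ≠ u := fun e => hxu' e
      have hxv : x ≠ v := fun e => G.irrefl (e ▸ hadj)
      refine ⟨hadj, ?_⟩
      rw [hswv, hswx x hxu hxv]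
      rcases lt_trichotomy (h x) (h u) with h' | h' | h'
      · exact absurd ⟨hgt, h'⟩ (hsep x hxu hxv)
      · exact absurd (hinj h') hxu
      · exact h'
  -- the two neighbours of u in the upper link of v
  obtain ⟨a, b, hab, hTeq⟩ := Set.ncard_eq_two.mp hdeg
  have haT : a ∈ {x ∈ upperLink G h v | G.Adj u x} := by rw [hTeq]; exact Set.mem_insert _ _
  have hbT : b ∈ {x ∈ upperLink G h v | G.Adj u x} := by
    rw [hTeq]; exact Set.mem_insert_of_mem _ rfl
  obtain ⟨haW, haAdj⟩ := haT
  obtain ⟨hbW, hbAdj⟩ := hbT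
  have hau : a ≠ u := fun e => G.irrefl (e ▸ haAdj)
  have hbu : b ≠ u := fun e => G.irrefl (e ▸ hbAdj)
  have huW : u ∈ upperLink G h v := ⟨huv.symm, hlt⟩
  have ha' : a ∈ upperLink G h v \ {u} := ⟨haW, fun e => hau e⟩
  have hb' : b ∈ upperLink G h v \ {u} := ⟨hbW, fun e => hbu e⟩
  refine ⟨h1, h2, h3, ⟨a, h3 ▸ ha'⟩, ?_, ⟨huv.symm, by rw [hswu, hswv]; exact hlt⟩⟩
  -- Part 5 : disconnectedness
  rw [h3]
  intro hc
  obtain ⟨n, ⟨e⟩⟩ := hpath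
  set W := upperLink G h v with hW
  set i : Fin n := e ⟨u, huW⟩ with hi
  have gadj : ∀ (y z : V) (hy : y ∈ W) (hz : z ∈ W), G.Adj y z →
      (SimpleGraph.pathGraph n).Adj (e ⟨y, hy⟩) (e ⟨z, hz⟩) := by
    intro y z hy hz hadj
    exact e.map_adj_iff.mpr hadj
  have gne : ∀ (y : V) (hy : y ∈ W), y ≠ u → e ⟨y, hy⟩ ≠ i := by
    intro y hy hyu heq
    exact hyu (congrArg Subtype.val (e.toEquiv.injective heq))
  -- invariant: being below i is preserved along walks avoiding u
  have step : ∀ (y z : ↥(W \ {u})), (G.induce (W \ {u})).Adj y z →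
      ((e ⟨y.1, y.2.1⟩).val < i.val ↔ (e ⟨z.1, z.2.1⟩).val < i.val) := by
    intro y z hadj
    have hyu : y.1 ≠ u := fun e => y.2.2 e
    have hzu : z.1 ≠ u := fun e => z.2.2 e
    have hadj' : (SimpleGraph.pathGraph n).Adj (e ⟨y.1, y.2.1⟩) (e ⟨z.1, z.2.1⟩) :=
      gadj _ _ _ _ hadj
    rw [SimpleGraph.pathGraph_adj] at hadj'
    have h1' : (e ⟨y.1, y.2.1⟩).val ≠ i.val :=
      fun hh => gne _ _ hyu (Fin.ext hh)
    have h2' : (e ⟨z.1, z.2.1⟩).val ≠ i.val :=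
      fun hh => gne _ _ hzu (Fin.ext hh)
    omega
  have inv : ∀ (y z : ↥(W \ {u})) (_ : (G.induce (W \ {u})).Walk y z),
      ((e ⟨y.1, y.2.1⟩).val < i.val ↔ (e ⟨z.1, z.2.1⟩).val < i.val) := by
    intro y z w
    induction w with
    | nil => exact Iff.rfl
    | cons hadj w ih => exact (step _ _ hadj).trans ih
  obtain ⟨w⟩ := hc.preconnected ⟨a, ha'⟩ ⟨b, hb'⟩
  have hinv := inv _ _ w
  have haadj : (SimpleGraph.pathGraph n).Adj i (e ⟨a, haW⟩) := gadj _ _ _ _ haAdj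
  have hbadj : (SimpleGraph.pathGraph n).Adj i (e ⟨b, hbW⟩) := gadj _ _ _ _ hbAdj
  rw [SimpleGraph.pathGraph_adj] at haadj hbadj
  have habne : (e ⟨a, haW⟩).val ≠ (e ⟨b, hbW⟩).val := by
    intro hh
    exact hab (congrArg Subtype.val (e.toEquiv.injective (Fin.ext hh)))
  have hval1 : (e (⟨a, ha'.1⟩ : W)).val = (e ⟨a, haW⟩).val := rfl
  have hval2 : (e (⟨b, hb'.1⟩ : W)).val = (e ⟨b, hbW⟩).val := rfl
  rw [hval1, hval2] at hinv
  omega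
end

section
/- Let v₁, v₂, v₃ ∈ ℝ² be affinely independent and let v ∈ convexHull {v₁, v₂, v₃}. Then convexHull {v₁, v₂, v₃} = convexHull {v, v₁, v₂} ∪ convexHull {v, v₂, v₃} ∪ convexHull {v, v₃, v₁}. -/
variable {E : Type*} [AddCommGroup E] [Module ℝ E]

private lemma mem_hull3 (p q r : E) (a b c : ℝ) (ha : 0 ≤ a) (hb : 0 ≤ b)
    (hc : 0 ≤ c) (habc : a + b + c = 1) :
    a • p + b • q + c • r ∈ convexHull ℝ ({p, q, r} : Set E) := by
  have hp : p ∈ convexHull ℝ ({p, q, r} : Set E) := subset_convexHull ℝ _ (by simp)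
  have hq : q ∈ convexHull ℝ ({p, q, r} : Set E) := subset_convexHull ℝ _ (by simp)
  have hr : r ∈ convexHull ℝ ({p, q, r} : Set E) := subset_convexHull ℝ _ (by simp)
  have hconv := convex_convexHull ℝ ({p, q, r} : Set E)
  rcases eq_or_lt_of_le (add_nonneg hb hc) with h | h
  · have hb0 : b = 0 := by linarith
    have hc0 : c = 0 := by linarith
    have ha1 : a = 1 := by linarith
    simpa [hb0, hc0, ha1] using hp
  · have hz : (b/(b+c)) • q + (c/(b+c)) • r ∈ convexHull ℝ ({p,q,r} : Set E) :=
      hconv hq hr (by positivity) (by positivity) (by field_simp)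
    have h2 := hconv hp hz (a := a) (b := b + c) ha (by positivity) (by linarith)
    convert h2 using 1
    match_scalars <;> field_simp

private lemma hull3_coords (p q r x : E) (hx : x ∈ convexHull ℝ ({p, q, r} : Set E)) :
    ∃ a b c : ℝ, 0 ≤ a ∧ 0 ≤ b ∧ 0 ≤ c ∧ a + b + c = 1 ∧ a • p + b • q + c • r = x := by
  rw [show ({p, q, r} : Set E) = insert p {q, r} from rfl,
    convexHull_insert ⟨q, by simp⟩] at hx
  obtain ⟨w, hw, hxw⟩ := Set.mem_iUnion₂.mp hx
  obtain ⟨z, hz, hxz⟩ := Set.mem_iUnion₂.mp hxw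
  rw [Set.mem_singleton_iff] at hw
  subst hw
  rw [convexHull_pair] at hz
  obtain ⟨t, t', ht, ht', htt, rfl⟩ := hz
  obtain ⟨u, u', hu, hu', huu, rfl⟩ := hxz
  exact ⟨u, u' * t, u' * t', hu, mul_nonneg hu' ht, mul_nonneg hu' ht',
    by linear_combination huu + u' * htt, by module⟩

private lemma argmin3 (a b : Fin 3 → ℝ) (ha : ∀ i, 0 ≤ a i) (hb : ∀ i, 0 ≤ b i)
    (hsa : a 0 + a 1 + a 2 = 1) :
    ∃ i, 0 < a i ∧ ∀ j, b i * a j ≤ b j * a i := by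
  have hne : (Finset.univ.filter (fun i => 0 < a i)).Nonempty := by
    by_contra h
    rw [Finset.not_nonempty_iff_eq_empty, Finset.filter_eq_empty_iff] at h
    have h0 := h (Finset.mem_univ 0); have h1 := h (Finset.mem_univ 1)
    have h2 := h (Finset.mem_univ 2)
    push_neg at h0 h1 h2
    have := ha 0; have := ha 1; have := ha 2
    linarith
  obtain ⟨i, hi, hmin⟩ := Finset.exists_min_image _ (fun i => b i / a i) hne
  rw [Finset.mem_filter] at hi
  refine ⟨i, hi.2, fun j => ?_⟩
  rcases lt_or_ge 0 (a j) with hj | hj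
  · have := hmin j (Finset.mem_filter.mpr ⟨Finset.mem_univ j, hj⟩)
    exact (div_le_div_iff₀ hi.2 hj).mp this
  · have : a j = 0 := le_antisymm hj (ha j)
    rw [this, mul_zero]
    exact mul_nonneg (hb j) (le_of_lt hi.2)

private lemma cover (v p q r x : E) (a₀ a₁ a₂ b₀ b₁ b₂ : ℝ)
    (ha₀ : 0 ≤ a₀) (ha₁ : 0 ≤ a₁) (hb₀ : 0 ≤ b₀) (hb₁ : 0 ≤ b₁) (hb₂ : 0 ≤ b₂)
    (hsa : a₀ + a₁ + a₂ = 1) (hsb : b₀ + b₁ + b₂ = 1)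
    (ha₂ : 0 < a₂) (h0 : b₂ * a₀ ≤ b₀ * a₂) (h1 : b₂ * a₁ ≤ b₁ * a₂)
    (hv : a₀ • p + a₁ • q + a₂ • r = v) (hx : b₀ • p + b₁ • q + b₂ • r = x) :
    x ∈ convexHull ℝ ({v, p, q} : Set E) := by
  set c₀ : ℝ := b₂ / a₂ with hc₀
  have hca : c₀ * a₂ = b₂ := div_mul_cancel₀ _ (ne_of_gt ha₂)
  have hc₀n : 0 ≤ c₀ := div_nonneg hb₂ (le_of_lt ha₂)
  have hc₁ : 0 ≤ b₀ - c₀ * a₀ := by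
    rw [sub_nonneg, hc₀, div_mul_eq_mul_div, div_le_iff₀ ha₂]
    linarith
  have hc₂ : 0 ≤ b₁ - c₀ * a₁ := by
    rw [sub_nonneg, hc₀, div_mul_eq_mul_div, div_le_iff₀ ha₂]
    linarith
  have hsum : c₀ + (b₀ - c₀ * a₀) + (b₁ - c₀ * a₁) = 1 := by
    have : c₀ * (a₀ + a₁ + a₂) = c₀ := by rw [hsa, mul_one]
    nlinarith [hca]
  have hmem := mem_hull3 v p q c₀ (b₀ - c₀ * a₀) (b₁ - c₀ * a₁) hc₀n hc₁ hc₂ hsum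
  have heq : c₀ • v + (b₀ - c₀ * a₀) • p + (b₁ - c₀ * a₁) • q = x := by
    rw [← hv, ← hx]
    match_scalars
    · ring
    · ring
    · linarith [hca]
  rwa [heq] at hmem

private lemma argmin3' (a₀ a₁ a₂ b₀ b₁ b₂ : ℝ)
    (ha₀ : 0 ≤ a₀) (ha₁ : 0 ≤ a₁) (ha₂ : 0 ≤ a₂)
    (hb₀ : 0 ≤ b₀) (hb₁ : 0 ≤ b₁) (hb₂ : 0 ≤ b₂) (hsa : a₀ + a₁ + a₂ = 1) :
    (0 < a₀ ∧ b₀ * a₁ ≤ b₁ * a₀ ∧ b₀ * a₂ ≤ b₂ * a₀) ∨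
    (0 < a₁ ∧ b₁ * a₀ ≤ b₀ * a₁ ∧ b₁ * a₂ ≤ b₂ * a₁) ∨
    (0 < a₂ ∧ b₂ * a₀ ≤ b₀ * a₂ ∧ b₂ * a₁ ≤ b₁ * a₂) := by
  obtain ⟨i, hi, hm⟩ := argmin3 ![a₀, a₁, a₂] ![b₀, b₁, b₂]
    (fun i => by fin_cases i <;> simpa) (fun i => by fin_cases i <;> simpa)
    (by simpa using hsa)
  fin_cases i
  · exact Or.inl ⟨by simpa using hi, by simpa using hm 1, by simpa using hm 2⟩
  · exact Or.inr (Or.inl ⟨by simpa using hi, by simpa using hm 0, by simpa using hm 2⟩)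
  · exact Or.inr (Or.inr ⟨by simpa using hi, by simpa using hm 0, by simpa using hm 1⟩)

/-- Inserting a vertex `v` inside a triangle `v₁v₂v₃` subdivides it into three
triangles with apex `v` covering exactly the original triangle. -/
theorem triangle_subdivision_three (v₁ v₂ v₃ : EuclideanSpace ℝ (Fin 2))
    (hindep : AffineIndependent ℝ ![v₁, v₂, v₃])
    (v : EuclideanSpace ℝ (Fin 2))
    (hv : v ∈ convexHull ℝ ({v₁, v₂, v₃} : Set (EuclideanSpace ℝ (Fin 2)))) :
    convexHull ℝ ({v₁, v₂, v₃} : Set (EuclideanSpace ℝ (Fin 2))) =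
      convexHull ℝ ({v, v₁, v₂} : Set (EuclideanSpace ℝ (Fin 2))) ∪
      convexHull ℝ ({v, v₂, v₃} : Set (EuclideanSpace ℝ (Fin 2))) ∪
      convexHull ℝ ({v, v₃, v₁} : Set (EuclideanSpace ℝ (Fin 2))) := by
  apply Set.Subset.antisymm
  · intro x hx
    obtain ⟨a₀, a₁, a₂, ha₀, ha₁, ha₂, hsa, hveq⟩ := hull3_coords v₁ v₂ v₃ v hv
    obtain ⟨b₀, b₁, b₂, hb₀, hb₁, hb₂, hsb, hxeq⟩ := hull3_coords v₁ v₂ v₃ x hx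
    rcases argmin3' a₀ a₁ a₂ b₀ b₁ b₂ ha₀ ha₁ ha₂ hb₀ hb₁ hb₂ hsa with
      ⟨hp, h1, h2⟩ | ⟨hp, h1, h2⟩ | ⟨hp, h1, h2⟩
    · exact Or.inl (Or.inr (cover v v₂ v₃ v₁ x a₁ a₂ a₀ b₁ b₂ b₀ ha₁ ha₂ hb₁ hb₂ hb₀
        (by linarith) (by linarith) hp h1 h2
        (by linear_combination (norm := module) hveq)
        (by linear_combination (norm := module) hxeq)))
    · exact Or.inr (cover v v₃ v₁ v₂ x a₂ a₀ a₁ b₂ b₀ b₁ ha₂ ha₀ hb₂ hb₀ hb₁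
        (by linarith) (by linarith) hp h2 h1
        (by linear_combination (norm := module) hveq)
        (by linear_combination (norm := module) hxeq))
    · exact Or.inl (Or.inl (cover v v₁ v₂ v₃ x a₀ a₁ a₂ b₀ b₁ b₂ ha₀ ha₁ hb₀ hb₁ hb₂
        hsa hsb hp h1 h2 hveq hxeq))
  · have hsub : ∀ a b : EuclideanSpace ℝ (Fin 2),
        a ∈ convexHull ℝ ({v₁, v₂, v₃} : Set (EuclideanSpace ℝ (Fin 2))) →
        b ∈ convexHull ℝ ({v₁, v₂, v₃} : Set (EuclideanSpace ℝ (Fin 2))) →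
        convexHull ℝ ({v, a, b} : Set (EuclideanSpace ℝ (Fin 2))) ⊆
          convexHull ℝ ({v₁, v₂, v₃} : Set (EuclideanSpace ℝ (Fin 2))) := by
      intro a b hA hB
      apply convexHull_min _ (convex_convexHull ℝ _)
      intro y hy
      rcases hy with rfl | rfl | rfl
      · exact hv
      · exact hA
      · exact hB
    have hm : ∀ y ∈ ({v₁, v₂, v₃} : Set (EuclideanSpace ℝ (Fin 2))),
        y ∈ convexHull ℝ ({v₁, v₂, v₃} : Set (EuclideanSpace ℝ (Fin 2))) :=
      fun y hy => subset_convexHull ℝ _ hy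
    refine Set.union_subset (Set.union_subset ?_ ?_) ?_
    · exact hsub v₁ v₂ (hm _ (by simp)) (hm _ (by simp))
    · exact hsub v₂ v₃ (hm _ (by simp)) (hm _ (by simp))
    · exact hsub v₃ v₁ (hm _ (by simp)) (hm _ (by simp))
end

section
/- Let v₁, v₂, v₃ ∈ ℝ² and let v lie on the segment [v₁, v₂]. Then convexHull {v₁, v₂, v₃} = convexHull {v, v₁, v₃} ∪ convexHull {v, v₂, v₃}. -/
/-- A point on a segment splits it into two subsegments whose union is the segment. -/
theorem segment_union_of_mem {E : Type*} [AddCommGroup E] [Module ℝ E] {x y z : E}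
    (h : z ∈ segment ℝ x y) : segment ℝ x z ∪ segment ℝ z y = segment ℝ x y := by
  obtain ⟨a, b, ha, hb, hab, hz⟩ := h
  apply Set.Subset.antisymm
  · apply Set.union_subset
    · exact (convex_segment x y).segment_subset (left_mem_segment ℝ x y)
        ⟨a, b, ha, hb, hab, hz⟩
    · exact (convex_segment x y).segment_subset ⟨a, b, ha, hb, hab, hz⟩
        (right_mem_segment ℝ x y)
  · rintro w ⟨s, t, hs, ht, hst, hw⟩
    by_cases htb : t ≤ b
    · left
      rcases eq_or_lt_of_le hb with hb0 | hb0
      · have ht0 : t = 0 := le_antisymm (htb.trans hb0.ge) ht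
        have : w = x := by
          rw [← hw, ht0]
          have : s = 1 := by linarith
          rw [this]; simp
        rw [this]; exact left_mem_segment ℝ x z
      · refine ⟨1 - t / b, t / b, ?_, by positivity, by ring, ?_⟩
        · have : t / b ≤ 1 := (div_le_one hb0).mpr htb
          linarith
        · rw [← hz, ← hw]
          match_scalars
          · field_simp
            nlinarith [hab, hst]
          · field_simp
    · right
      have hsa : s ≤ a := by linarith
      rcases eq_or_lt_of_le ha with ha0 | ha0
      · have hs0 : s = 0 := le_antisymm (hsa.trans ha0.ge) hs
        have : w = y := by
          rw [← hw, hs0]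
          have : t = 1 := by linarith
          rw [this]; simp
        rw [this]; exact right_mem_segment ℝ z y
      · refine ⟨s / a, 1 - s / a, by positivity, ?_, by ring, ?_⟩
        · have : s / a ≤ 1 := (div_le_one ha0).mpr hsa
          linarith
        · rw [← hz, ← hw]
          match_scalars
          · field_simp
          · field_simp
            nlinarith [hab, hst]

/-- Inserting a vertex `v` on the edge `v₁v₂` of a triangle `v₁v₂v₃` subdivides it
into two triangles covering exactly the original triangle. -/
theorem triangle_subdivision_two (v₁ v₂ v₃ v : EuclideanSpace ℝ (Fin 2))
    (hv : v ∈ segment ℝ v₁ v₂) :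
    convexHull ℝ ({v₁, v₂, v₃} : Set (EuclideanSpace ℝ (Fin 2))) =
      convexHull ℝ ({v, v₁, v₃} : Set (EuclideanSpace ℝ (Fin 2))) ∪
      convexHull ℝ ({v, v₂, v₃} : Set (EuclideanSpace ℝ (Fin 2))) := by
  have h1 : ({v, v₁, v₃} : Set (EuclideanSpace ℝ (Fin 2))) = {v₁, v, v₃} :=
    Set.insert_comm _ _ _
  have h2 : ({v, v₂, v₃} : Set (EuclideanSpace ℝ (Fin 2))) = {v₂, v, v₃} := by
    rw [Set.insert_comm]
  rw [h1, h2, ← convexJoin_segment_singleton, ← convexJoin_segment_singleton,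
    ← convexJoin_segment_singleton, ← segment_union_of_mem hv, convexJoin_union_left,
    segment_symm ℝ v₂ v]
end
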